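/- If every connected component of a finite simple graph G is a clique-star, and H is a pivot-minor of G, then every connected component of H is a clique-star. -/

import Mathlib

/-!  Basic notions: local complementation, edge pivot, pivot-equivalence, pivot-minors. -/

variable {V : Type*} {W : Type*}

/-- Local complementation at a vertex `u`: complement the adjacency inside the
neighbourhood of `u`. -/
def localComp (G : SimpleGraph V) (u : V) : SimpleGraph V where
  Adj x y := x ≠ y ∧
    ((G.Adj u x ∧ G.Adj u y ∧ ¬ G.Adj x y) ∨ (¬ (G.Adj u x ∧ G.Adj u y) ∧ G.Adj x y))
  symm := by
    constructor
    intro x y h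
    obtain ⟨hne, h⟩ := h
    refine ⟨hne.symm, ?_⟩
    rw [G.adj_comm y x]
    tauto
  loopless := by
    constructor
    intro x h
    exact h.1 rfl

/-- The edge pivot `G ∧ uv = ((G * u) * v) * u`. -/
def pivotEdge (G : SimpleGraph V) (u v : V) : SimpleGraph V :=
  localComp (localComp (localComp G u) v) u

/-- One pivot step: pivoting along an edge of the graph. -/
def PivotStep (G G' : SimpleGraph V) : Prop :=
  ∃ u v, G.Adj u v ∧ G' = pivotEdge G u v

/-- Two graphs on the same vertex set are pivot-equivalent if one can be obtained
from the other by a sequence of edge pivots. -/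
def PivotEquiv (G G' : SimpleGraph V) : Prop :=
  Relation.ReflTransGen PivotStep G G'

/-- `H` is a pivot-minor of `G` on the vertex subset `s`: `H` is obtained (up to
isomorphism) from `G` by a sequence of edge pivots and deletions of the vertices
outside `s`.  Since pivoting an edge commutes with deleting a vertex not on that
edge, this is equivalent to performing all the edge pivots first and then deleting
the vertices outside `s`, which is how we state it. -/
def HasPivotMinorOn (G : SimpleGraph V) (s : Set V) (H : SimpleGraph W) : Prop :=
  ∃ G' : SimpleGraph V, PivotEquiv G G' ∧ Nonempty ((G'.induce s) ≃g H)

/-- `G` contains a pivot-minor isomorphic to `H`. -/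
def HasPivotMinor (G : SimpleGraph V) (H : SimpleGraph W) : Prop :=
  ∃ s : Set V, HasPivotMinorOn G s H

/-- `G'` is a result of contracting the vertex `v` in `G` (denoted `G/v`):
if `v` is isolated this is `G - v`, and otherwise it is `(G ∧ zv) - v`
for some neighbour `z` of `v` (well defined up to pivot-equivalence). -/
def IsContraction (G : SimpleGraph V) (v : V) (G' : SimpleGraph ↥{u : V | u ≠ v}) : Prop :=
  ((∀ z, ¬ G.Adj v z) ∧ G' = G.induce {u : V | u ≠ v}) ∨
    (∃ z, G.Adj v z ∧ G' = (pivotEdge G z v).induce {u : V | u ≠ v})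

/-- `G` is `H`-pivot-unique: `G` contains a pivot-minor isomorphic to `H` and for
every vertex `v`, at most one of `G - v` and `G / v` contains a pivot-minor
isomorphic to `H`. -/
def PivotUnique (G : SimpleGraph V) (H : SimpleGraph W) : Prop :=
  HasPivotMinor G H ∧
    ∀ v : V, ¬ (HasPivotMinor (G.induce {u : V | u ≠ v}) H ∧
      ∃ G' : SimpleGraph ↥{u : V | u ≠ v}, IsContraction G v G' ∧ HasPivotMinor G' H)

/-- `G` contains an induced subgraph isomorphic to `H`. -/
def HasInducedSubgraphIso (G : SimpleGraph V) (H : SimpleGraph W) : Prop :=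
  ∃ s : Set V, Nonempty ((G.induce s) ≃g H)

/-- A graph is a clique-star if it is a complete graph, or its vertex set can be
partitioned into pairwise disjoint nonempty cliques `K, L₁, …, L_p` (`p ≥ 1`) such
that every vertex of `K` is adjacent to every vertex of `L₁ ∪ ⋯ ∪ L_p` and there
are no edges between distinct cliques `Lᵢ` and `Lⱼ`. -/
def IsCliqueStar {V : Type*} (G : SimpleGraph V) : Prop :=
  G = ⊤ ∨
    ∃ (K : Set V) (Ls : Set (Set V)),
      K.Nonempty ∧ Ls.Nonempty ∧ (∀ L ∈ Ls, L.Nonempty) ∧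
      K ∪ ⋃₀ Ls = Set.univ ∧
      (∀ L ∈ Ls, Disjoint K L) ∧
      (∀ L₁ ∈ Ls, ∀ L₂ ∈ Ls, L₁ ≠ L₂ → Disjoint L₁ L₂) ∧
      G.IsClique K ∧ (∀ L ∈ Ls, G.IsClique L) ∧
      (∀ x ∈ K, ∀ y ∈ ⋃₀ Ls, G.Adj x y) ∧
      (∀ L₁ ∈ Ls, ∀ L₂ ∈ Ls, L₁ ≠ L₂ → ∀ x ∈ L₁, ∀ y ∈ L₂, ¬ G.Adj x y)

/-!
A graph whose components are clique-stars is described, component by component, by a labelling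
`f : V → Option α`: the centre `K` is labelled `none`, the leaf clique `Lᵢ` is labelled `some i`,
and `x ≠ y` are adjacent iff one of their labels is `none` or the labels agree. Pivoting an edge
`uv` of such a graph merely exchanges the labels `f u` and `f v` (for `u ∈ K` and `v ∈ Lᵢ`, the
leaf `Lᵢ` becomes the new centre and `K` a leaf), while local complementation, and hence pivoting,
does not change the connected components. Induced subgraphs are labelled by restriction, and a
connected labelled graph is a clique-star: if its centre is empty, connectivity forces a single
leaf, i.e. a complete graph.
-/

section LocalComplementation

variable {G : SimpleGraph V} {w x y : V}

lemma localComp_adj :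
    (localComp G w).Adj x y ↔ x ≠ y ∧ (G.Adj x y ↔ ¬(G.Adj w x ∧ G.Adj w y)) := by
  simp only [localComp]
  tauto

lemma localComp_adj_left : (localComp G w).Adj w x ↔ G.Adj w x := by
  grind [localComp_adj, SimpleGraph.irrefl, SimpleGraph.Adj.ne]

lemma localComp_localComp : localComp (localComp G w) w = G := by
  ext x y
  rw [localComp_adj, localComp_adj, localComp_adj_left, localComp_adj_left]
  grind [G.ne_of_adj]

lemma localComp_induce {s : Set V} (hw : w ∈ s) :
    (localComp G w).induce s = localComp (G.induce s) ⟨w, hw⟩ := by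
  ext x y
  simp [localComp_adj, Subtype.ext_iff]

lemma SimpleGraph.Reachable.of_localComp (h : (localComp G w).Reachable x y) :
    G.Reachable x y := by
  rw [SimpleGraph.reachable_iff_reflTransGen] at *
  refine h.lift' id fun a b hab => ?_
  rw [localComp_adj] at hab
  by_cases hGab : G.Adj a b
  · exact .single hGab
  · obtain ⟨hwa, hwb⟩ : G.Adj w a ∧ G.Adj w b := by tauto
    exact .tail (.single hwa.symm) hwb

lemma reachable_localComp_iff : (localComp G w).Reachable x y ↔ G.Reachable x y :=
  ⟨.of_localComp, fun h => .of_localComp (by rwa [localComp_localComp])⟩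

end LocalComplementation

section Pivot

variable {G : SimpleGraph V} {u v x y : V}

lemma reachable_pivotEdge_iff : (pivotEdge G u v).Reachable x y ↔ G.Reachable x y := by
  simp only [pivotEdge, reachable_localComp_iff]

lemma pivotEdge_induce {s : Set V} (hu : u ∈ s) (hv : v ∈ s) :
    (pivotEdge G u v).induce s = pivotEdge (G.induce s) ⟨u, hu⟩ ⟨v, hv⟩ := by
  simp only [pivotEdge, localComp_induce hu, localComp_induce hv]

lemma pivotEdge_adj_self (huv : G.Adj u v) : (pivotEdge G u v).Adj u v := by
  simp only [pivotEdge, localComp_adj, G.adj_comm v u]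
  grind [SimpleGraph.irrefl]

lemma pivotEdge_adj_left (huv : G.Adj u v) (hyu : y ≠ u) (hyv : y ≠ v) :
    (pivotEdge G u v).Adj u y ↔ G.Adj v y := by
  simp only [pivotEdge, localComp_adj, G.adj_comm v u]
  grind [SimpleGraph.irrefl]

lemma pivotEdge_adj_right (huv : G.Adj u v) (hyu : y ≠ u) (hyv : y ≠ v) :
    (pivotEdge G u v).Adj v y ↔ G.Adj u y := by
  simp only [pivotEdge, localComp_adj, G.adj_comm v u]
  grind [SimpleGraph.irrefl]

/-- Away from `u` and `v`, pivoting toggles exactly the pairs lying in two different classes among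
`N(u) \ N(v)`, `N(v) \ N(u)` and `N(u) ∩ N(v)`. -/
lemma pivotEdge_adj_of_ne (huv : G.Adj u v) (hxu : x ≠ u) (hxv : x ≠ v) (hyu : y ≠ u)
    (hyv : y ≠ v) :
    (pivotEdge G u v).Adj x y ↔ Xor (G.Adj x y)
      ((G.Adj u x ∨ G.Adj v x) ∧ (G.Adj u y ∨ G.Adj v y) ∧
        ¬((G.Adj u x ↔ G.Adj u y) ∧ (G.Adj v x ↔ G.Adj v y))) := by
  simp only [pivotEdge, localComp_adj, G.adj_comm v u, Xor]
  grind [SimpleGraph.irrefl]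

lemma pivotEdge_induce_of_not_adj (huv : G.Adj u v) {s : Set V}
    (hs : ∀ x ∈ s, ¬G.Adj u x ∧ ¬G.Adj v x) : (pivotEdge G u v).induce s = G.induce s := by
  have hne : ∀ x ∈ s, x ≠ u ∧ x ≠ v := fun x hx =>
    ⟨by rintro rfl; exact (hs x hx).2 huv.symm, by rintro rfl; exact (hs x hx).1 huv⟩
  ext x y
  simp [pivotEdge_adj_of_ne huv (hne x x.2).1 (hne x x.2).2 (hne y y.2).1 (hne y y.2).2,
    (hs x x.2).1, (hs x x.2).2, Xor]

end Pivot

section LabelAdj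

variable {α : Type*}

def LabelAdj (p q : Option α) : Prop := p = none ∨ q = none ∨ p = q

lemma LabelAdj.symm {p q : Option α} (h : LabelAdj p q) : LabelAdj q p := by
  unfold LabelAdj at *
  tauto

variable [DecidableEq α] {a b : Option α}

lemma labelAdj_swap_right (hab : LabelAdj a b) (q : Option α) :
    LabelAdj b (Equiv.swap a b q) ↔ LabelAdj b q := by
  unfold LabelAdj at *
  simp only [Equiv.swap_apply_def]
  grind

lemma labelAdj_swap_swap (hab : LabelAdj a b) (p q : Option α) :
    LabelAdj (Equiv.swap a b p) (Equiv.swap a b q) ↔ Xor (LabelAdj p q)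
      ((LabelAdj a p ∨ LabelAdj b p) ∧ (LabelAdj a q ∨ LabelAdj b q) ∧
        ¬((LabelAdj a p ↔ LabelAdj a q) ∧ (LabelAdj b p ↔ LabelAdj b q))) := by
  unfold LabelAdj at *
  simp only [Xor, Equiv.swap_apply_def]
  grind

end LabelAdj

/-- The vertices labelled `none` form the centre clique and each label `some i` a leaf clique.
The centre may be empty, in which case this is a disjoint union of cliques. -/
def cliqueStarGraph {α : Type*} (f : V → Option α) : SimpleGraph V where
  Adj x y := x ≠ y ∧ LabelAdj (f x) (f y)
  symm := ⟨fun _ _ h => ⟨h.1.symm, h.2.symm⟩⟩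
  loopless := ⟨fun _ h => h.1 rfl⟩

section CliqueStarGraph

variable {α : Type*} {f : V → Option α} {u v x y : V}

lemma cliqueStarGraph_adj : (cliqueStarGraph f).Adj x y ↔ x ≠ y ∧ LabelAdj (f x) (f y) :=
  Iff.rfl

lemma cliqueStarGraph_comap {ψ : W → V} (hψ : Function.Injective ψ) :
    (cliqueStarGraph f).comap ψ = cliqueStarGraph (f ∘ ψ) := by
  ext x y
  simp [cliqueStarGraph_adj, hψ.ne_iff]

lemma pivotEdge_cliqueStarGraph_adj_of_ne [DecidableEq α] (huv : (cliqueStarGraph f).Adj u v)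
    (hxu : x ≠ u) (hxv : x ≠ v) (hyu : y ≠ u) (hyv : y ≠ v) :
    (pivotEdge (cliqueStarGraph f) u v).Adj x y ↔
      (cliqueStarGraph (Equiv.swap (f u) (f v) ∘ f)).Adj x y := by
  simp only [pivotEdge_adj_of_ne huv hxu hxv hyu hyv, cliqueStarGraph_adj, Function.comp_apply,
    labelAdj_swap_swap huv.2, Ne.symm hxu, Ne.symm hxv, Ne.symm hyu, Ne.symm hyv, ne_eq,
    not_false_eq_true, true_and]
  by_cases hxy : x = y
  · subst hxy
    simp [Xor]
  · simp [hxy]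

lemma pivotEdge_cliqueStarGraph [DecidableEq α] (huv : (cliqueStarGraph f).Adj u v) :
    pivotEdge (cliqueStarGraph f) u v = cliqueStarGraph (Equiv.swap (f u) (f v) ∘ f) := by
  have hu : ∀ y, y ≠ u → y ≠ v → ((pivotEdge (cliqueStarGraph f) u v).Adj u y ↔
      (cliqueStarGraph (Equiv.swap (f u) (f v) ∘ f)).Adj u y) := by
    intro y hyu hyv
    rw [pivotEdge_adj_left huv hyu hyv, cliqueStarGraph_adj, cliqueStarGraph_adj,
      Function.comp_apply, Function.comp_apply, Equiv.swap_apply_left, labelAdj_swap_right huv.2]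
    simp [hyu.symm, hyv.symm]
  have hv : ∀ y, y ≠ u → y ≠ v → ((pivotEdge (cliqueStarGraph f) u v).Adj v y ↔
      (cliqueStarGraph (Equiv.swap (f u) (f v) ∘ f)).Adj v y) := by
    intro y hyu hyv
    rw [pivotEdge_adj_right huv hyu hyv, cliqueStarGraph_adj, cliqueStarGraph_adj,
      Function.comp_apply, Function.comp_apply, Equiv.swap_comm, Equiv.swap_apply_left,
      labelAdj_swap_right huv.2.symm]
    simp [hyu.symm, hyv.symm]
  have huv' : (cliqueStarGraph (Equiv.swap (f u) (f v) ∘ f)).Adj u v := by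
    simpa [cliqueStarGraph_adj, huv.ne] using huv.2.symm
  ext x y
  by_cases hx : x = u ∨ x = v <;> by_cases hy : y = u ∨ y = v
  · obtain ⟨rfl | rfl, rfl | rfl⟩ := And.intro hx hy <;>
      simp [pivotEdge_adj_self huv, (pivotEdge_adj_self huv).symm, huv', huv'.symm]
  · push Not at hy
    rcases hx with rfl | rfl
    exacts [hu y hy.1 hy.2, hv y hy.1 hy.2]
  · push Not at hx
    rw [SimpleGraph.adj_comm, (cliqueStarGraph _).adj_comm]
    rcases hy with rfl | rfl
    exacts [hu x hx.1 hx.2, hv x hx.1 hx.2]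
  · push Not at hx hy
    exact pivotEdge_cliqueStarGraph_adj_of_ne huv hx.1 hx.2 hy.1 hy.2

lemma cliqueStarGraph_eq_top (h : ∀ x y, LabelAdj (f x) (f y)) : cliqueStarGraph f = ⊤ := by
  ext x y
  simp [cliqueStarGraph_adj, h x y]

lemma isCliqueStar_cliqueStarGraph_of_exists (hK : ∃ x, f x = none) (hL : ∃ y, f y ≠ none) :
    IsCliqueStar (cliqueStarGraph f) := by
  obtain ⟨y₀, hy₀⟩ := hL
  have hleaf : ∀ y₁ y₂, ({z | f z = f y₁} : Set V) = {z | f z = f y₂} ↔ f y₁ = f y₂ := by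
    intro y₁ y₂
    refine ⟨fun h => ?_, fun h => by rw [h]⟩
    have : y₁ ∈ {z | f z = f y₂} := h ▸ rfl
    exact this
  refine .inr ⟨{x | f x = none}, {L | ∃ y, f y ≠ none ∧ L = {z | f z = f y}}, hK,
    ⟨_, y₀, hy₀, rfl⟩, ?_, ?_, ?_, ?_, ?_, ?_, ?_, ?_⟩
  · rintro _ ⟨y, -, rfl⟩
    exact ⟨y, rfl⟩
  · refine Set.eq_univ_of_forall fun z => ?_
    by_cases hz : f z = none
    · exact .inl hz
    · exact .inr ⟨_, ⟨z, hz, rfl⟩, rfl⟩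
  · rintro _ ⟨y, hy, rfl⟩
    exact Set.disjoint_left.2 fun z hz hzy => hy (hzy.symm.trans hz)
  · rintro _ ⟨y₁, -, rfl⟩ _ ⟨y₂, -, rfl⟩ hne
    exact Set.disjoint_left.2 fun z h₁ h₂ => hne ((hleaf y₁ y₂).2 (h₁.symm.trans h₂))
  · exact fun x hx y _ hxy => ⟨hxy, .inl hx⟩
  · rintro _ ⟨y, -, rfl⟩ x hx z hz hxz
    exact ⟨hxz, .inr (.inr (hx.trans hz.symm))⟩
  · rintro x hx z ⟨_, ⟨y, hy, rfl⟩, hz⟩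
    exact ⟨fun h => hy (hz.symm.trans (h ▸ hx)), .inl hx⟩
  · rintro _ ⟨y₁, hy₁, rfl⟩ _ ⟨y₂, hy₂, rfl⟩ hne x hx z hz ⟨-, hxz⟩
    have hx : f x = f y₁ := hx
    have hz : f z = f y₂ := hz
    refine hne ((hleaf y₁ y₂).2 ?_)
    unfold LabelAdj at hxz
    grind

lemma isCliqueStar_cliqueStarGraph (hconn : (cliqueStarGraph f).Preconnected) :
    IsCliqueStar (cliqueStarGraph f) := by
  by_cases hK : ∃ x, f x = none
  · by_cases hL : ∃ y, f y ≠ none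
    · exact isCliqueStar_cliqueStarGraph_of_exists hK hL
    · push Not at hL
      exact .inl (cliqueStarGraph_eq_top fun x _ => .inl (hL x))
  · push Not at hK
    have hlabel : ∀ x y, (cliqueStarGraph f).Reachable x y → f x = f y := by
      intro x y hxy
      rw [SimpleGraph.reachable_iff_reflTransGen] at hxy
      induction hxy with
      | refl => rfl
      | tail _ hyz ih =>
        obtain ⟨-, hyz⟩ := hyz
        unfold LabelAdj at hyz
        grind
    exact .inl (cliqueStarGraph_eq_top fun x y => .inr (.inr (hlabel x y (hconn x y))))

lemma IsCliqueStar.exists_eq_cliqueStarGraph {G : SimpleGraph V} (h : IsCliqueStar G) :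
    ∃ f : V → Option (Set V), G = cliqueStarGraph f := by
  classical
  rcases h with rfl | ⟨K, Ls, -, -, -, hcover, hKL, hLL, hK, hL, hKLs, hLLs⟩
  · exact ⟨fun _ => none, (cliqueStarGraph_eq_top fun _ _ => .inl rfl).symm⟩
  let f : V → Option (Set V) := fun x => if x ∈ K then none else some {y | ∃ L ∈ Ls, x ∈ L ∧ y ∈ L}
  have hf : ∀ x, (x ∈ K ∧ f x = none) ∨ ∃ L ∈ Ls, x ∈ L ∧ f x = some L := by
    intro x
    have : x ∈ K ∪ ⋃₀ Ls := hcover ▸ Set.mem_univ x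
    rcases this with hx | ⟨L, hL, hx⟩
    · exact .inl ⟨hx, if_pos hx⟩
    refine .inr ⟨L, hL, hx, ?_⟩
    rw [show f x = _ from if_neg (Set.disjoint_right.1 (hKL L hL) hx)]
    congr 1
    ext y
    refine ⟨fun ⟨L', hL', hxL', hyL'⟩ => ?_, fun hy => ⟨L, hL, hx, hy⟩⟩
    by_contra hne
    exact Set.disjoint_left.1 (hLL L hL L' hL' (by rintro rfl; exact hne hyL')) hx hxL'
  refine ⟨f, ?_⟩
  ext x y
  rw [cliqueStarGraph_adj]
  rcases hf x with ⟨hx, hfx⟩ | ⟨L₁, hL₁, hx, hfx⟩ <;>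
    rcases hf y with ⟨hy, hfy⟩ | ⟨L₂, hL₂, hy, hfy⟩ <;>
    simp only [LabelAdj, hfx, hfy, true_or, or_true, and_true, reduceCtorEq, false_or,
      Option.some.injEq]
  · exact ⟨G.ne_of_adj, hK hx hy⟩
  · exact ⟨G.ne_of_adj, fun _ => hKLs x hx y ⟨L₂, hL₂, hy⟩⟩
  · exact ⟨G.ne_of_adj, fun _ => (hKLs y hy x ⟨L₁, hL₁, hx⟩).symm⟩
  · by_cases h : L₁ = L₂
    · subst h
      exact ⟨fun hxy => ⟨hxy.ne, rfl⟩, fun hxy => hL L₁ hL₁ hx hy hxy.1⟩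
    · exact iff_of_false (hLLs L₁ hL₁ L₂ hL₂ h x hx y hy) fun hxy => h hxy.2

lemma isCliqueStar_of_eq_cliqueStarGraph {G : SimpleGraph V} (hconn : G.Preconnected)
    (h : G = cliqueStarGraph f) : IsCliqueStar G :=
  h ▸ isCliqueStar_cliqueStarGraph (h ▸ hconn)

end CliqueStarGraph

def ComponentwiseCliqueStar (G : SimpleGraph V) : Prop :=
  ∀ c : G.ConnectedComponent, IsCliqueStar (G.induce c.supp)

namespace ComponentwiseCliqueStar

open SimpleGraph

variable {G G' : SimpleGraph V} {u v : V}

lemma pivot (hG : ComponentwiseCliqueStar G) (huv : G.Adj u v) :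
    ComponentwiseCliqueStar (pivotEdge G u v) := by
  classical
  intro c
  obtain ⟨x, hx⟩ := c.exists_rep
  replace hx : (pivotEdge G u v).connectedComponentMk x = c := hx
  set S := (G.connectedComponentMk x).supp
  have hsupp : c.supp = S := by
    ext y
    rw [ConnectedComponent.mem_supp_iff, ConnectedComponent.mem_supp_iff, ← hx,
      ConnectedComponent.eq, ConnectedComponent.eq, reachable_pivotEdge_iff]
  have hconn : ((pivotEdge G u v).induce S).Preconnected :=
    hsupp ▸ c.connected_toSimpleGraph.preconnected
  rw [hsupp]
  obtain ⟨f, hf⟩ := (hG (G.connectedComponentMk x)).exists_eq_cliqueStarGraph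
  by_cases hu : u ∈ S
  · have hv : v ∈ S := ConnectedComponent.mem_supp_of_adj_mem_supp _ hu huv
    have huv' : (cliqueStarGraph f).Adj ⟨u, hu⟩ ⟨v, hv⟩ := by rw [← hf]; exact huv
    refine isCliqueStar_of_eq_cliqueStarGraph hconn
      (f := Equiv.swap (f ⟨u, hu⟩) (f ⟨v, hv⟩) ∘ f) ?_
    rw [pivotEdge_induce hu hv, hf, pivotEdge_cliqueStarGraph huv']
  · have hS {a b : V} (ha : a ∈ S) (hab : G.Adj a b) : b ∈ S :=
      ConnectedComponent.mem_supp_of_adj_mem_supp _ ha hab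
    refine isCliqueStar_of_eq_cliqueStarGraph hconn (f := f) ?_
    rw [pivotEdge_induce_of_not_adj huv fun y hy =>
      ⟨fun h => hu (hS hy h.symm), fun h => hu (hS (hS hy h.symm) huv.symm)⟩, hf]

lemma pivotEquiv (hG : ComponentwiseCliqueStar G) (h : PivotEquiv G G') :
    ComponentwiseCliqueStar G' := by
  induction h with
  | refl => exact hG
  | tail _ hstep ih =>
    obtain ⟨u, v, huv, rfl⟩ := hstep
    exact ih.pivot huv

lemma comap {H : SimpleGraph W} (φ : H ↪g G) (hG : ComponentwiseCliqueStar G) :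
    ComponentwiseCliqueStar H := by
  intro c
  obtain ⟨f, hf⟩ := (hG (c.map φ.toHom)).exists_eq_cliqueStarGraph
  let ψ : c.supp → (c.map φ.toHom).supp := fun x => ⟨φ x, by
    rw [ConnectedComponent.mem_supp_iff]
    exact (ConnectedComponent.map_mk φ.toHom _).symm.trans (congrArg _ x.2)⟩
  have hψ : Function.Injective ψ := fun x y h =>
    Subtype.ext (φ.injective (congrArg Subtype.val h))
  refine isCliqueStar_of_eq_cliqueStarGraph c.connected_toSimpleGraph.preconnected (f := f ∘ ψ) ?_
  rw [← cliqueStarGraph_comap hψ, ← hf]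
  ext x y
  simp [ψ]

end ComponentwiseCliqueStar

theorem cliqueStar_pivotMinor_closed_general {V : Type*} {W : Type*}
    (G : SimpleGraph V) (H : SimpleGraph W)
    (hG : ∀ c : G.ConnectedComponent, IsCliqueStar (G.induce c.supp))
    (hGH : HasPivotMinor G H) :
    ∀ c : H.ConnectedComponent, IsCliqueStar (H.induce c.supp) := by
  obtain ⟨s, G', hpiv, ⟨e⟩⟩ := hGH
  exact (ComponentwiseCliqueStar.pivotEquiv hG hpiv).comap
    (e.symm.toEmbedding.trans (SimpleGraph.Embedding.induce s))

/-- If every connected component of `G` is a clique-star and `H`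
is a pivot-minor of `G`, then every connected component of `H` is a clique-star. -/
theorem cliqueStar_pivotMinor_closed {V : Type*} {W : Type*} [Fintype V] [Fintype W]
    (G : SimpleGraph V) (H : SimpleGraph W)
    (hG : ∀ c : G.ConnectedComponent, IsCliqueStar (G.induce c.supp))
    (hGH : HasPivotMinor G H) :
    ∀ c : H.ConnectedComponent, IsCliqueStar (H.induce c.supp) :=
  cliqueStar_pivotMinor_closed_general G H hG hGH
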